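/- arXiv:2411.09960 — 6 statements merged into one kernel-verified Lean document; each statement's English description precedes it below -/
import Mathlib

section
/- For nonincreasing real sequences λ_1 ≥ ... ≥ λ_n and μ_1 ≥ ... ≥ μ_n, the 'shift' matching inequality holds: (λ_1 - μ_n)^2 + ∑_{i=1}^{n-1} (λ_{i+1} - μ_i)^2 ≥ ∑_{i=1}^n (λ_i - μ_i)^2. -/
theorem stmt_3 (n : ℕ) (a b : Fin (n + 1) → ℝ)
    (ha : Antitone a) (hb : Antitone b) :
    ∑ i, (a i - b i) ^ 2 ≤
      (a 0 - b (Fin.last n)) ^ 2 + ∑ i : Fin n, (a i.succ - b i.castSucc) ^ 2 := by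
  set σ := (finRotate (n + 1)).symm with hσ
  have hσ0 : σ 0 = Fin.last n := by
    rw [hσ, Equiv.symm_apply_eq, finRotate_last]
  have hσs : ∀ i : Fin n, σ i.succ = i.castSucc := by
    intro i
    rw [hσ, Equiv.symm_apply_eq, finRotate_succ_apply, Fin.coeSucc_eq_succ]
  have hRHS : (a 0 - b (Fin.last n)) ^ 2 + ∑ i : Fin n, (a i.succ - b i.castSucc) ^ 2
      = ∑ i, (a i - b (σ i)) ^ 2 := by
    rw [Fin.sum_univ_succ, hσ0]
    congr 1
    exact Finset.sum_congr rfl fun i _ => by rw [hσs i]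
  rw [hRHS]
  have key : ∑ i, a i * b (σ i) ≤ ∑ i, a i * b i :=
    (ha.monovary hb).sum_smul_comp_perm_le_sum_smul
  have hb2 : ∑ i, b (σ i) ^ 2 = ∑ i, b i ^ 2 :=
    Equiv.sum_comp σ (fun i => b i ^ 2)
  have e1 : ∀ (c : Fin (n+1) → ℝ), ∑ i, (a i - c i) ^ 2
      = ∑ i, a i ^ 2 - 2 * ∑ i, a i * c i + ∑ i, c i ^ 2 := by
    intro c
    rw [Finset.mul_sum, ← Finset.sum_sub_distrib, ← Finset.sum_add_distrib]
    exact Finset.sum_congr rfl fun i _ => by ring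
  rw [e1 b, e1 (fun i => b (σ i))]
  simp only [hb2]
  linarith
end

section
/- For nonincreasing real sequences λ_1 ≥ ... ≥ λ_n and μ_1 ≥ ... ≥ μ_n with λ_n ≥ μ_n, the shift matching inequality for absolute values holds: |λ_1 - μ_n| + ∑_{i=1}^{n-1} |λ_{i+1} - μ_i| ≥ ∑_{i=1}^n |λ_i - μ_i|. -/
lemma swap_abs {x y u v : ℝ} (hxy : y ≤ x) (huv : v ≤ u) :
    |x - u| + |y - v| ≤ |x - v| + |y - u| := by
  rcases abs_cases (x - u) with ⟨h1, _⟩ | ⟨h1, _⟩ <;>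
  rcases abs_cases (y - v) with ⟨h2, _⟩ | ⟨h2, _⟩ <;>
  rcases abs_cases (x - v) with ⟨h3, _⟩ | ⟨h3, _⟩ <;>
  rcases abs_cases (y - u) with ⟨h4, _⟩ | ⟨h4, _⟩ <;>
  linarith

lemma aux (n : ℕ) (a b : Fin (n + 1) → ℝ)
    (ha : Antitone a) (hb : Antitone b) :
    ∑ i, |a i - b i| ≤
      |a 0 - b (Fin.last n)| + ∑ i : Fin n, |a i.succ - b i.castSucc| := by
  induction n with
  | zero => simp [Fin.last]
  | succ n ih =>
    have hsucc : Monotone (Fin.succ : Fin (n + 1) → Fin (n + 2)) :=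
      Fin.strictMono_succ.monotone
    have key := ih (fun i => a i.succ) (fun i => b i.succ)
      (ha.comp_monotone hsucc) (hb.comp_monotone hsucc)
    rw [Fin.sum_univ_succ (fun i => |a i - b i|),
        Fin.sum_univ_succ (fun i : Fin (n+1) => |a i.succ - b i.castSucc|)]
    have hlast : (Fin.last n).succ = Fin.last (n + 1) := rfl
    have h01 : (0 : Fin (n+1)).succ = (1 : Fin (n+2)) := Fin.succ_zero_eq_one
    simp only [hlast, h01, Fin.succ_castSucc] at key ⊢
    have hswap : |a 0 - b 0| + |a 1 - b (Fin.last (n+1))| ≤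
        |a 0 - b (Fin.last (n+1))| + |a 1 - b 0| :=
      swap_abs (ha (Fin.zero_le 1)) (hb (Fin.le_last 0))
    have : (0 : Fin (n+2)).succ = ((0 : Fin (n+1)).succ).castSucc := by
      simp [Fin.ext_iff]
    simp only [Fin.succ_zero_eq_one] at this
    -- goal arrangement
    calc |a 0 - b 0| + ∑ i : Fin (n+1), |a i.succ - b i.succ|
        ≤ |a 0 - b 0| + (|a 1 - b (Fin.last (n+1))| +
            ∑ i : Fin n, |a i.succ.succ - b i.succ.castSucc|) := by
          linarith [key]
      _ ≤ |a 0 - b (Fin.last (n+1))| + (|a 1 - b 0| +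
            ∑ i : Fin n, |a i.succ.succ - b i.succ.castSucc|) := by linarith
      _ = _ := by congr 1

theorem stmt_4 (n : ℕ) (a b : Fin (n + 1) → ℝ)
    (ha : Antitone a) (hb : Antitone b) (h : b (Fin.last n) ≤ a (Fin.last n)) :
    ∑ i, |a i - b i| ≤
      |a 0 - b (Fin.last n)| + ∑ i : Fin n, |a i.succ - b i.castSucc| := by
  exact aux n a b ha hb
end

section
/- Define, for two functions Λ, Γ : ℕ → ℝ≥0 with finite support and p ≥ 1, the quantity d_p(Λ, Γ) = inf over bijections σ : ℕ → ℕ of (∑_i |Λ(i) - Γ(σ(i))|^p)^{1/p}. Then d_p satisfies the triangle inequality: d_p(Λ, Ν) ≤ d_p(Λ, Γ) + d_p(Γ, Ν) for any three such finitely-supported functions. -/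
/-- The similarity pseudo-distance `d_p` between two sequences:
the infimum over bijections `σ : ℕ → ℕ` of `(∑ i, |Λ i - Γ (σ i)|^p)^(1/p)`. -/
noncomputable def dP (p : ℝ) (Λ Γ : ℕ → ℝ) : ℝ :=
  ⨅ σ : Equiv.Perm ℕ, (∑' i, |Λ i - Γ (σ i)| ^ p) ^ (1 / p)

theorem stmt_5 (p : ℝ) (hp : 1 ≤ p) (Λ Γ Ν : ℕ → ℝ)
    (hΛ0 : ∀ i, 0 ≤ Λ i) (hΓ0 : ∀ i, 0 ≤ Γ i) (hΝ0 : ∀ i, 0 ≤ Ν i)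
    (hΛ : (Function.support Λ).Finite) (hΓ : (Function.support Γ).Finite)
    (hΝ : (Function.support Ν).Finite) :
    dP p Λ Ν ≤ dP p Λ Γ + dP p Γ Ν := by
  have hp0 : p ≠ 0 := by linarith
  unfold dP
  refine le_ciInf_add_ciInf fun σ τ => ?_
  -- the composed permutation
  set ρ : Equiv.Perm ℕ := τ * σ with hρ
  have hbdd : BddBelow (Set.range fun σ' : Equiv.Perm ℕ =>
      (∑' i, |Λ i - Ν (σ' i)| ^ p) ^ (1 / p)) := by
    refine ⟨0, fun x hx => ?_⟩
    obtain ⟨σ', rfl⟩ := hx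
    exact Real.rpow_nonneg (tsum_nonneg fun i => Real.rpow_nonneg (abs_nonneg _) p) _
  refine le_trans (ciInf_le hbdd ρ) ?_
  -- choose a common finite support set
  have h2 : ((⇑σ) ⁻¹' Function.support Γ).Finite :=
    hΓ.preimage σ.injective.injOn
  have h3 : ((⇑ρ) ⁻¹' Function.support Ν).Finite :=
    hΝ.preimage ρ.injective.injOn
  have hS : (Function.support Λ ∪ ((⇑σ) ⁻¹' Function.support Γ)
      ∪ ((⇑ρ) ⁻¹' Function.support Ν)).Finite := (hΛ.union h2).union h3
  set S : Finset ℕ := hS.toFinset with hSdef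
  have hmemS : ∀ i ∉ S, Λ i = 0 ∧ Γ (σ i) = 0 ∧ Ν (ρ i) = 0 := by
    intro i hi
    simp only [hSdef, Set.Finite.mem_toFinset, Set.mem_union, Set.mem_preimage,
      Function.mem_support, not_or, not_not] at hi
    exact ⟨hi.1.1, hi.1.2, hi.2⟩
  have key0 : ∀ (f : ℕ → ℝ), (∀ i ∉ S, f i = 0) →
      ∑' i, |f i| ^ p = ∑ i ∈ S, |f i| ^ p := by
    intro f hf
    refine tsum_eq_sum fun i hi => ?_
    rw [hf i hi, abs_zero, Real.zero_rpow hp0]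
  -- rewrite the three tsums as finite sums
  have e1 : ∑' i, |Λ i - Ν (ρ i)| ^ p = ∑ i ∈ S, |Λ i - Ν (ρ i)| ^ p :=
    key0 _ fun i hi => by rw [(hmemS i hi).1, (hmemS i hi).2.2, sub_zero]
  have e2 : ∑' i, |Λ i - Γ (σ i)| ^ p = ∑ i ∈ S, |Λ i - Γ (σ i)| ^ p :=
    key0 _ fun i hi => by rw [(hmemS i hi).1, (hmemS i hi).2.1, sub_zero]
  have e3 : ∑' i, |Γ (σ i) - Ν (ρ i)| ^ p = ∑ i ∈ S, |Γ (σ i) - Ν (ρ i)| ^ p :=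
    key0 _ fun i hi => by rw [(hmemS i hi).2.1, (hmemS i hi).2.2, sub_zero]
  -- reindex the middle-to-last term
  have e4 : ∑' i, |Γ (σ i) - Ν (ρ i)| ^ p = ∑' j, |Γ j - Ν (τ j)| ^ p := by
    have := Equiv.tsum_eq (σ : ℕ ≃ ℕ) (fun j => |Γ j - Ν (τ j)| ^ p)
    simpa [hρ, Equiv.Perm.mul_apply] using this
  calc (∑' i, |Λ i - Ν (ρ i)| ^ p) ^ (1 / p)
      = (∑ i ∈ S, |(Λ i - Γ (σ i)) + (Γ (σ i) - Ν (ρ i))| ^ p) ^ (1 / p) := by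
        rw [e1]; congr 1; refine Finset.sum_congr rfl fun i _ => ?_; ring_nf
    _ ≤ (∑ i ∈ S, |Λ i - Γ (σ i)| ^ p) ^ (1 / p)
        + (∑ i ∈ S, |Γ (σ i) - Ν (ρ i)| ^ p) ^ (1 / p) :=
        Real.Lp_add_le S _ _ hp
    _ = (∑' i, |Λ i - Γ (σ i)| ^ p) ^ (1 / p) + (∑' j, |Γ j - Ν (τ j)| ^ p) ^ (1 / p) := by
        rw [e2, ← e3, e4]
end

section
/- Hoffman–Wielandt inequality for real symmetric matrices: if A and B are n×n real symmetric matrices with eigenvalues λ_1, ..., λ_n and μ_1, ..., μ_n (with multiplicity), then there exists a permutation π of {1,...,n} such that ∑_{i=1}^n (μ_{π(i)} - λ_i)^2 ≤ ‖B - A‖_F², where ‖·‖_F is the Frobenius norm. -/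
open Matrix Finset

/-- Key trace identity for the Hoffman–Wielandt inequality. -/
lemma hw_key (n : ℕ) (A B : Matrix (Fin n) (Fin n) ℝ)
    (hA : A.IsHermitian) (hB : B.IsHermitian) :
    ∑ i, ∑ j, A i j * B i j =
      ∑ i, ∑ j, hA.eigenvalues i * hB.eigenvalues j *
        ((star (hA.eigenvectorUnitary : Matrix (Fin n) (Fin n) ℝ) *
          (hB.eigenvectorUnitary : Matrix (Fin n) (Fin n) ℝ)) i j) ^ 2 := by
  set U : Matrix (Fin n) (Fin n) ℝ := (hA.eigenvectorUnitary : Matrix (Fin n) (Fin n) ℝ) with hU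
  set V : Matrix (Fin n) (Fin n) ℝ := (hB.eigenvectorUnitary : Matrix (Fin n) (Fin n) ℝ) with hV
  have h1 : ∑ i, ∑ j, A i j * B i j = trace (A * B) := by
    rw [Matrix.trace]
    simp only [Matrix.mul_apply, Matrix.diag_apply]
    rw [Finset.sum_comm]
    refine Finset.sum_congr rfl fun i _ => Finset.sum_congr rfl fun j _ => ?_
    have hb : B j i = B i j := by
      conv_lhs => rw [← hB.eq]
      simp [Matrix.conjTranspose_apply]
    have ha : A j i = A i j := by
      conv_lhs => rw [← hA.eq]
      simp [Matrix.conjTranspose_apply]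
    rw [hb, ha, mul_comm]
  rw [h1]
  have hAe : A = U * diagonal hA.eigenvalues * star U := by
    have := hA.spectral_theorem; simpa using this
  have hBe : B = V * diagonal hB.eigenvalues * star V := by
    have := hB.spectral_theorem; simpa using this
  have hprod : A * B = U * (diagonal hA.eigenvalues * (star U * V) *
      (diagonal hB.eigenvalues * star V)) := by
    conv_lhs => rw [hAe, hBe]
    simp only [Matrix.mul_assoc]
  have h2 : trace (A * B) = trace (diagonal hA.eigenvalues * (star U * V) *
      diagonal hB.eigenvalues * star (star U * V)) := by
    rw [hprod, trace_mul_comm]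
    congr 1
    simp only [Matrix.star_mul, star_star, Matrix.mul_assoc]
  rw [h2]
  set W : Matrix (Fin n) (Fin n) ℝ := star U * V with hW
  have h3 : ∀ i j, (diagonal hA.eigenvalues * W * diagonal hB.eigenvalues) i j =
      hA.eigenvalues i * W i j * hB.eigenvalues j := by
    intro i j
    rw [Matrix.mul_diagonal, Matrix.diagonal_mul]
  rw [Matrix.trace]
  simp only [Matrix.diag_apply]
  refine Finset.sum_congr rfl fun i _ => ?_
  rw [Matrix.mul_apply]
  refine Finset.sum_congr rfl fun j _ => ?_
  rw [h3, Matrix.star_apply, star_trivial]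
  ring

theorem stmt_14 (n : ℕ) (A B : Matrix (Fin n) (Fin n) ℝ)
    (hA : A.IsHermitian) (hB : B.IsHermitian) :
    ∃ π : Equiv.Perm (Fin n),
      ∑ i, (hB.eigenvalues (π i) - hA.eigenvalues i) ^ 2 ≤
        ∑ i, ∑ j, ((B - A) i j) ^ 2 := by
  set lam := hA.eigenvalues
  set mu := hB.eigenvalues
  set U : Matrix (Fin n) (Fin n) ℝ := (hA.eigenvectorUnitary : Matrix (Fin n) (Fin n) ℝ)
  set V : Matrix (Fin n) (Fin n) ℝ := (hB.eigenvectorUnitary : Matrix (Fin n) (Fin n) ℝ)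
  set W : Matrix (Fin n) (Fin n) ℝ := star U * V with hWdef
  have hWU : W ∈ Matrix.unitaryGroup (Fin n) ℝ :=
    mul_mem (Unitary.star_mem hA.eigenvectorUnitary.2) hB.eigenvectorUnitary.2
  have hrow : ∀ i, ∑ j, (W i j) ^ 2 = 1 := by
    intro i
    have h : (W * star W) i i = 1 := by
      rw [(Matrix.mem_unitaryGroup_iff).mp hWU]; simp [Matrix.one_apply]
    rw [Matrix.mul_apply] at h
    simp only [Matrix.star_apply, star_trivial] at h
    calc ∑ j, (W i j) ^ 2 = ∑ j, W i j * W i j := by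
          exact Finset.sum_congr rfl fun j _ => sq (W i j)
      _ = 1 := h
  have hcol : ∀ j, ∑ i, (W i j) ^ 2 = 1 := by
    intro j
    have h : (star W * W) j j = 1 := by
      rw [(Matrix.mem_unitaryGroup_iff').mp hWU]; simp [Matrix.one_apply]
    rw [Matrix.mul_apply] at h
    simp only [Matrix.star_apply, star_trivial] at h
    calc ∑ i, (W i j) ^ 2 = ∑ i, W i j * W i j := by
          exact Finset.sum_congr rfl fun i _ => sq (W i j)
      _ = 1 := h
  have hS : Matrix.of (fun i j => (W i j) ^ 2) ∈ doublyStochastic ℝ (Fin n) := by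
    rw [mem_doublyStochastic_iff_sum]
    exact ⟨fun i j => sq_nonneg _, hrow, hcol⟩
  obtain ⟨w, hw0, hw1, hwS⟩ := exists_eq_sum_perm_of_mem_doublyStochastic hS
  have hwS' : ∀ i j, (W i j) ^ 2 = ∑ σ : Equiv.Perm (Fin n), w σ * (σ.permMatrix ℝ) i j := by
    intro i j
    have h := congrFun (congrFun hwS i) j
    simp only [Finset.sum_apply, Matrix.sum_apply, Matrix.smul_apply, smul_eq_mul,
      Matrix.of_apply] at h
    exact h.symm
  obtain ⟨π, -, hπ⟩ := Finset.exists_max_image (Finset.univ : Finset (Equiv.Perm (Fin n)))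
    (fun σ => ∑ i, lam i * mu (σ i)) ⟨1, Finset.mem_univ 1⟩
  refine ⟨π, ?_⟩
  have hperm : ∀ σ : Equiv.Perm (Fin n),
      ∑ i, ∑ j, lam i * mu j * (σ.permMatrix ℝ i j) = ∑ i, lam i * mu (σ i) := by
    intro σ
    refine Finset.sum_congr rfl fun i _ => ?_
    rw [Finset.sum_eq_single (σ i) (fun b _ hb => by
      simp [Equiv.Perm.permMatrix, PEquiv.toMatrix_apply, Equiv.toPEquiv_apply, Ne.symm hb])
      (by simp)]
    simp [Equiv.Perm.permMatrix, PEquiv.toMatrix_apply, Equiv.toPEquiv_apply]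
  have hcross : ∑ i, ∑ j, lam i * mu j * (W i j) ^ 2 ≤ ∑ i, lam i * mu (π i) := by
    calc ∑ i, ∑ j, lam i * mu j * (W i j) ^ 2
        = ∑ i, ∑ j, ∑ σ : Equiv.Perm (Fin n), w σ * (lam i * mu j * σ.permMatrix ℝ i j) := by
          refine Finset.sum_congr rfl fun i _ => Finset.sum_congr rfl fun j _ => ?_
          rw [hwS' i j, Finset.mul_sum]
          exact Finset.sum_congr rfl fun σ _ => by ring
      _ = ∑ σ : Equiv.Perm (Fin n), ∑ i, ∑ j, w σ * (lam i * mu j * σ.permMatrix ℝ i j) := by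
          rw [show (∑ i, ∑ j, ∑ σ : Equiv.Perm (Fin n),
              w σ * (lam i * mu j * σ.permMatrix ℝ i j)) =
              ∑ i, ∑ σ : Equiv.Perm (Fin n), ∑ j, w σ * (lam i * mu j * σ.permMatrix ℝ i j) from
            Finset.sum_congr rfl fun i _ => Finset.sum_comm]
          exact Finset.sum_comm
      _ = ∑ σ : Equiv.Perm (Fin n), w σ * ∑ i, lam i * mu (σ i) := by
          refine Finset.sum_congr rfl fun σ _ => ?_
          rw [← hperm σ, Finset.mul_sum]
          exact Finset.sum_congr rfl fun i _ => by rw [Finset.mul_sum]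
      _ ≤ ∑ σ : Equiv.Perm (Fin n), w σ * ∑ i, lam i * mu (π i) := by
          refine Finset.sum_le_sum fun σ _ => ?_
          exact mul_le_mul_of_nonneg_left (hπ σ (Finset.mem_univ σ)) (hw0 σ)
      _ = ∑ i, lam i * mu (π i) := by rw [← Finset.sum_mul, hw1, one_mul]
  have hU1 : star U * U = 1 := Matrix.mem_unitaryGroup_iff'.mp hA.eigenvectorUnitary.2
  have hV1 : star V * V = 1 := Matrix.mem_unitaryGroup_iff'.mp hB.eigenvectorUnitary.2
  have hAA : ∑ i, ∑ j, A i j * A i j = ∑ i, (lam i) ^ 2 := by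
    rw [hw_key n A A hA hA, hU1]
    refine Finset.sum_congr rfl fun i _ => ?_
    rw [Finset.sum_eq_single i (fun b _ hb => by simp [Matrix.one_apply, Ne.symm hb]) (by simp)]
    rw [Matrix.one_apply_eq]
    ring
  have hBB : ∑ i, ∑ j, B i j * B i j = ∑ i, (mu i) ^ 2 := by
    rw [hw_key n B B hB hB, hV1]
    refine Finset.sum_congr rfl fun i _ => ?_
    rw [Finset.sum_eq_single i (fun b _ hb => by simp [Matrix.one_apply, Ne.symm hb]) (by simp)]
    rw [Matrix.one_apply_eq]
    ring
  have hAB : ∑ i, ∑ j, A i j * B i j = ∑ i, ∑ j, lam i * mu j * (W i j) ^ 2 :=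
    hw_key n A B hA hB
  have hRHS : ∑ i, ∑ j, ((B - A) i j) ^ 2 =
      ∑ i, (mu i) ^ 2 + ∑ i, (lam i) ^ 2 - 2 * ∑ i, ∑ j, lam i * mu j * (W i j) ^ 2 := by
    rw [← hAA, ← hBB, ← hAB]
    simp only [Finset.mul_sum, ← Finset.sum_sub_distrib, ← Finset.sum_add_distrib]
    refine Finset.sum_congr rfl fun i _ => ?_
    try simp only [Finset.mul_sum, ← Finset.sum_sub_distrib, ← Finset.sum_add_distrib]
    refine Finset.sum_congr rfl fun j _ => ?_
    simp only [Matrix.sub_apply]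
    ring
  have hmusum : ∑ i, (mu (π i)) ^ 2 = ∑ i, (mu i) ^ 2 :=
    Equiv.sum_comp π (fun i => (mu i) ^ 2)
  have hLHS : ∑ i, (mu (π i) - lam i) ^ 2 =
      ∑ i, (mu i) ^ 2 + ∑ i, (lam i) ^ 2 - 2 * ∑ i, lam i * mu (π i) := by
    rw [← hmusum]
    simp only [Finset.mul_sum, ← Finset.sum_sub_distrib, ← Finset.sum_add_distrib]
    refine Finset.sum_congr rfl fun i _ => ?_
    ring
  rw [hLHS, hRHS]
  linarith
end

section
/- For nonincreasing finitely-supported sequences λ, μ : ℕ → ℝ≥0 (λ_1 ≥ λ_2 ≥ ..., all but finitely many zero), the infimum over bijections σ : ℕ → ℕ of (∑_i (λ_i - μ_{σ(i)})²)^{1/2} equals (∑_i (λ_i - μ_i)²)^{1/2}. -/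
open Finset

/-- Rearrangement inequality for injections: for antitone nonnegative sequences,
the sum of `lam i * mu (g i)` over a finset `T` with `g` injective on `T` is at most
the aligned sum over an initial segment of the same cardinality. -/
lemma rearr_aux (lam mu : ℕ → ℝ) (hlam0 : ∀ i, 0 ≤ lam i) (hmu0 : ∀ i, 0 ≤ mu i)
    (hlam : Antitone lam) (hmu : Antitone mu) :
    ∀ (n : ℕ) (T : Finset ℕ) (g : ℕ → ℕ), T.card = n → Set.InjOn g T →
      ∑ i ∈ T, lam i * mu (g i) ≤ ∑ i ∈ Finset.range n, lam i * mu i := by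
  intro n
  induction n with
  | zero =>
    intro T g hT _
    simp [Finset.card_eq_zero.mp hT]
  | succ n ih =>
    intro T g hT hg
    have hne : T.Nonempty := Finset.card_pos.mp (by omega)
    set b := T.max' hne with hb
    have hbT : b ∈ T := T.max'_mem hne
    have hne' : (T.image g).Nonempty := hne.image g
    obtain ⟨a, haT, hga⟩ := Finset.mem_image.mp ((T.image g).max'_mem hne')
    set g' : ℕ → ℕ := fun i => g (Equiv.swap a b i) with hg'def
    have hswapT : ∀ x ∈ T, Equiv.swap a b x ∈ T := by
      intro x hx
      rcases eq_or_ne x a with rfl | hxa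
      · simpa [Equiv.swap_apply_left] using hbT
      rcases eq_or_ne x b with rfl | hxb
      · simpa [Equiv.swap_apply_right] using haT
      · rwa [Equiv.swap_apply_of_ne_of_ne hxa hxb]
    have hg' : Set.InjOn g' T := by
      intro x hx y hy hxy
      exact (Equiv.swap a b).injective (hg (hswapT x hx) (hswapT y hy) hxy)
    have hab : a ≤ b := Finset.le_max' T a haT
    have hgba : g b ≤ g a := by
      rw [hga]; exact Finset.le_max' _ _ (Finset.mem_image_of_mem g hbT)
    -- Step 1: swapping increases the sum
    have step1 : ∑ i ∈ T, lam i * mu (g i) ≤ ∑ i ∈ T, lam i * mu (g' i) := by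
      rcases eq_or_ne a b with rfl | hne2
      · apply le_of_eq
        apply Finset.sum_congr rfl
        intro i _
        simp [hg'def, Equiv.swap_self]
      · have hbTa : b ∈ T.erase a := Finset.mem_erase.mpr ⟨Ne.symm hne2, hbT⟩
        have hsplit : ∀ h : ℕ → ℕ, ∑ i ∈ T, lam i * mu (h i) =
            lam a * mu (h a) + (lam b * mu (h b) +
              ∑ i ∈ (T.erase a).erase b, lam i * mu (h i)) := by
          intro h
          rw [← Finset.add_sum_erase T _ haT, ← Finset.add_sum_erase (T.erase a) _ hbTa]
        rw [hsplit g, hsplit g']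
        have hrest : ∑ i ∈ (T.erase a).erase b, lam i * mu (g' i) =
            ∑ i ∈ (T.erase a).erase b, lam i * mu (g i) := by
          apply Finset.sum_congr rfl
          intro i hi
          have hia : i ≠ a := (Finset.mem_erase.mp (Finset.mem_erase.mp hi).2).1
          have hib : i ≠ b := (Finset.mem_erase.mp hi).1
          simp [hg'def, Equiv.swap_apply_of_ne_of_ne hia hib]
        rw [hrest]
        have h1 : g' a = g b := by simp [hg'def, Equiv.swap_apply_left]
        have h2 : g' b = g a := by simp [hg'def, Equiv.swap_apply_right]
        rw [h1, h2]
        have hlab : lam b ≤ lam a := hlam hab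
        have hmab : mu (g a) ≤ mu (g b) := hmu hgba
        nlinarith [mul_nonneg (sub_nonneg.mpr hlab) (sub_nonneg.mpr hmab)]
    -- Step 2: peel off b
    have hcarde : (T.erase b).card = n := by
      rw [Finset.card_erase_of_mem hbT, hT]
      omega
    have hg'e : Set.InjOn g' (T.erase b) := hg'.mono (by
      intro x hx; exact Finset.mem_of_mem_erase hx)
    have hIH := ih (T.erase b) g' hcarde hg'e
    have hnb : n ≤ b := by
      have hsub : T ⊆ Finset.range (b + 1) := by
        intro i hi
        exact Finset.mem_range.mpr (Nat.lt_succ_of_le (Finset.le_max' T i hi))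
      have := Finset.card_le_card hsub
      rw [hT, Finset.card_range] at this
      omega
    have hnga : n ≤ g a := by
      have hcard : (T.image g).card = n + 1 := by
        rw [Finset.card_image_of_injOn hg, hT]
      have hsub : T.image g ⊆ Finset.range (g a + 1) := by
        intro j hj
        refine Finset.mem_range.mpr (Nat.lt_succ_of_le ?_)
        rw [hga]; exact Finset.le_max' _ _ hj
      have := Finset.card_le_card hsub
      rw [hcard, Finset.card_range] at this
      omega
    have h2 : g' b = g a := by simp [hg'def, Equiv.swap_apply_right]
    have htop : lam b * mu (g' b) ≤ lam n * mu n := by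
      rw [h2]
      exact mul_le_mul (hlam hnb) (hmu hnga) (hmu0 _) (hlam0 _)
    calc ∑ i ∈ T, lam i * mu (g i)
        ≤ ∑ i ∈ T, lam i * mu (g' i) := step1
      _ = lam b * mu (g' b) + ∑ i ∈ T.erase b, lam i * mu (g' i) :=
          (Finset.add_sum_erase T _ hbT).symm
      _ ≤ lam n * mu n + ∑ i ∈ Finset.range n, lam i * mu i := add_le_add htop hIH
      _ = ∑ i ∈ Finset.range (n + 1), lam i * mu i := by
          rw [Finset.sum_range_succ]; ring

theorem stmt_17 (lam mu : ℕ → ℝ)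
    (hlam0 : ∀ i, 0 ≤ lam i) (hmu0 : ∀ i, 0 ≤ mu i)
    (hlam : Antitone lam) (hmu : Antitone mu)
    (hlamfin : (Function.support lam).Finite) (hmufin : (Function.support mu).Finite) :
    (⨅ σ : Equiv.Perm ℕ, Real.sqrt (∑' i, (lam i - mu (σ i)) ^ 2)) =
      Real.sqrt (∑' i, (lam i - mu i) ^ 2) := by
  obtain ⟨N, hN⟩ := Finset.exists_nat_subset_range (hlamfin.toFinset ∪ hmufin.toFinset)
  have hlamN : ∀ i, i ∉ Finset.range N → lam i = 0 := by
    intro i hi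
    by_contra h
    exact hi (hN (Finset.mem_union_left _ (hlamfin.mem_toFinset.mpr h)))
  have hmuN : ∀ i, i ∉ Finset.range N → mu i = 0 := by
    intro i hi
    by_contra h
    exact hi (hN (Finset.mem_union_right _ (hmufin.mem_toFinset.mpr h)))
  -- expansion of sums of squares
  have expand : ∀ (s : Finset ℕ) (f g : ℕ → ℝ), ∑ i ∈ s, (f i - g i) ^ 2 =
      ∑ i ∈ s, f i ^ 2 - 2 * ∑ i ∈ s, f i * g i + ∑ i ∈ s, g i ^ 2 := by
    intro s f g
    rw [Finset.mul_sum, ← Finset.sum_sub_distrib, ← Finset.sum_add_distrib]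
    apply Finset.sum_congr rfl
    intro i _
    ring
  -- helper: aligned products sums are monotone-capped at N
  have haligned : ∀ m : ℕ, ∑ i ∈ Finset.range m, lam i * mu i ≤
      ∑ i ∈ Finset.range N, lam i * mu i := by
    intro m
    rcases le_total m N with h | h
    · exact Finset.sum_le_sum_of_subset_of_nonneg
        (Finset.range_subset_range.mpr h)
        (fun i _ _ => mul_nonneg (hlam0 i) (hmu0 i))
    · exact le_of_eq (Finset.sum_subset (Finset.range_subset_range.mpr h)
        (fun i _ hi => by rw [hlamN i hi]; ring)).symm
  -- the key pointwise inequality for each permutation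
  have key : ∀ σ : Equiv.Perm ℕ,
      (∑' i, (lam i - mu i) ^ 2) ≤ ∑' i, (lam i - mu (σ i)) ^ 2 := by
    intro σ
    set K : Finset ℕ := Finset.range N ∪ hmufin.toFinset.image σ.symm with hK
    have hRange : Finset.range N ⊆ K := Finset.subset_union_left
    have hzero : ∀ i, i ∉ K → (lam i - mu (σ i)) ^ 2 = 0 := by
      intro i hi
      have h1 : lam i = 0 := hlamN i (fun h => hi (hRange h))
      have h2 : mu (σ i) = 0 := by
        by_contra h
        have : σ i ∈ hmufin.toFinset := hmufin.mem_toFinset.mpr h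
        have : i ∈ hmufin.toFinset.image σ.symm := by
          refine Finset.mem_image.mpr ⟨σ i, this, ?_⟩
          simp
        exact hi (Finset.mem_union_right _ this)
      rw [h1, h2]; ring
    have hzero' : ∀ i, i ∉ Finset.range N → (lam i - mu i) ^ 2 = 0 := by
      intro i hi
      rw [hlamN i hi, hmuN i hi]; ring
    rw [tsum_eq_sum hzero', tsum_eq_sum hzero]
    rw [expand, expand]
    -- ∑ lam² over K equals over range N
    have e1 : ∑ i ∈ K, lam i ^ 2 = ∑ i ∈ Finset.range N, lam i ^ 2 := by
      symm
      apply Finset.sum_subset hRange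
      intro i _ hi
      rw [hlamN i hi]; ring
    -- ∑ mu (σ i)² over K equals ∑ mu² over range N
    have e2 : ∑ i ∈ K, mu (σ i) ^ 2 = ∑ i ∈ Finset.range N, mu i ^ 2 := by
      have himg : ∑ j ∈ K.image σ, mu j ^ 2 = ∑ i ∈ K, mu (σ i) ^ 2 :=
        Finset.sum_image (fun x _ y _ h => σ.injective h)
      rw [← himg]
      have hsub : hmufin.toFinset ⊆ K.image σ := by
        intro j hj
        refine Finset.mem_image.mpr ⟨σ.symm j, ?_, by simp⟩
        exact Finset.mem_union_right _ (Finset.mem_image_of_mem _ hj)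
      have hsub2 : hmufin.toFinset ⊆ Finset.range N := by
        intro j hj
        exact hN (Finset.mem_union_right _ hj)
      have hA : ∑ j ∈ hmufin.toFinset, mu j ^ 2 = ∑ j ∈ K.image σ, mu j ^ 2 :=
        Finset.sum_subset hsub (fun j _ hj => by
          rw [Function.notMem_support.mp (fun h => hj (hmufin.mem_toFinset.mpr h))]; ring)
      have hB : ∑ j ∈ hmufin.toFinset, mu j ^ 2 = ∑ j ∈ Finset.range N, mu j ^ 2 :=
        Finset.sum_subset hsub2 (fun j _ hj => by
          rw [Function.notMem_support.mp (fun h => hj (hmufin.mem_toFinset.mpr h))]; ring)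
      rw [← hA, hB]
    -- cross terms: rearrangement
    have e3 : ∑ i ∈ K, lam i * mu (σ i) ≤ ∑ i ∈ Finset.range N, lam i * mu i := by
      calc ∑ i ∈ K, lam i * mu (σ i)
          ≤ ∑ i ∈ Finset.range K.card, lam i * mu i :=
            rearr_aux lam mu hlam0 hmu0 hlam hmu K.card K σ rfl
              (σ.injective.injOn)
        _ ≤ ∑ i ∈ Finset.range N, lam i * mu i := haligned K.card
    rw [e1, e2]
    linarith
  have hbdd : BddBelow (Set.range fun σ : Equiv.Perm ℕ =>
      Real.sqrt (∑' i, (lam i - mu (σ i)) ^ 2)) := by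
    refine ⟨0, ?_⟩
    rintro x ⟨σ, rfl⟩
    exact Real.sqrt_nonneg _
  apply le_antisymm
  · have := ciInf_le hbdd (1 : Equiv.Perm ℕ)
    simpa using this
  · apply le_ciInf
    intro σ
    exact Real.sqrt_le_sqrt (key σ)
end

section
/- For nonincreasing finitely-supported sequences λ, μ : ℕ → ℝ≥0, the infimum over bijections σ : ℕ → ℕ of ∑_i |λ_i - μ_{σ(i)}| equals ∑_i |λ_i - μ_i|. -/
private lemma exch (a b c d : ℝ) (hab : b ≤ a) (hcd : d ≤ c) :
    |a - c| + |b - d| ≤ |a - d| + |b - c| := by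
  rcases abs_cases (a - c) with ⟨h1, _⟩ | ⟨h1, _⟩ <;>
    rcases abs_cases (b - d) with ⟨h2, _⟩ | ⟨h2, _⟩ <;>
    linarith [le_abs_self (a - d), le_abs_self (b - c), neg_abs_le (a - d), neg_abs_le (b - c)]

private lemma tsum_two (f g : ℕ → ℝ) (hf : Summable f) (hg : Summable g) (k j : ℕ)
    (hkj : k ≠ j) (hoff : ∀ i, i ≠ k → i ≠ j → g i = f i)
    (hsum : g k + g j ≤ f k + f j) : ∑' i, g i ≤ ∑' i, f i := by
  have expand : ∀ h : ℕ → ℝ, Summable h →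
      ∑' i, h i = h k + h j + ∑' i, Function.update (Function.update h k 0) j 0 i := by
    intro h hh
    rw [Summable.tsum_eq_add_tsum_ite hh k]
    have h2 : ∑' i, (if i = k then 0 else h i) = ∑' i, Function.update h k 0 i :=
      tsum_congr fun i => by rw [Function.update_apply]
    rw [h2, Summable.tsum_eq_add_tsum_ite (hh.update k 0) j]
    have h3 : ∑' i, (if i = j then 0 else Function.update h k 0 i)
        = ∑' i, Function.update (Function.update h k 0) j 0 i :=
      tsum_congr fun i => by simp [Function.update_apply]
    rw [h3, Function.update_of_ne hkj.symm, add_assoc]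
  have htail : (∑' i, Function.update (Function.update g k 0) j 0 i)
      = ∑' i, Function.update (Function.update f k 0) j 0 i := by
    refine tsum_congr fun i => ?_
    by_cases hik : i = k
    · subst hik; simp [Function.update_apply, hkj]
    · by_cases hij : i = j
      · subst hij; simp [Function.update_apply]
      · simp [Function.update_apply, hik, hij, hoff i hik hij]
  rw [expand f hf, expand g hg, htail]
  linarith

theorem stmt_18 (lam mu : ℕ → ℝ)
    (hlam0 : ∀ i, 0 ≤ lam i) (hmu0 : ∀ i, 0 ≤ mu i)
    (hlam : Antitone lam) (hmu : Antitone mu)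
    (hlamfin : (Function.support lam).Finite) (hmufin : (Function.support mu).Finite) :
    (⨅ σ : Equiv.Perm ℕ, ∑' i, |lam i - mu (σ i)|) = ∑' i, |lam i - mu i| := by
  obtain ⟨n, hn⟩ : ∃ n, ∀ i, n ≤ i → lam i = 0 ∧ mu i = 0 := by
    obtain ⟨m, hm⟩ := (hlamfin.union hmufin).bddAbove
    refine ⟨m + 1, fun i hi => ⟨?_, ?_⟩⟩ <;> by_contra h
    · exact absurd (hm (Set.mem_union_left _ h)) (by omega)
    · exact absurd (hm (Set.mem_union_right _ h)) (by omega)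
  have hsumm : ∀ σ : Equiv.Perm ℕ, Summable fun i => |lam i - mu (σ i)| := by
    intro σ
    apply summable_of_finite_support
    apply Set.Finite.subset (hlamfin.union (hmufin.preimage (σ.injective.injOn)))
    intro i hi
    simp only [Function.mem_support] at hi
    by_contra hc
    simp only [Set.mem_union, Set.mem_preimage, Function.mem_support, not_or, not_not] at hc
    rw [hc.1, hc.2] at hi
    simp at hi
  have main : ∀ d k, n ≤ k + d → ∀ σ : Equiv.Perm ℕ, (∀ i < k, σ i = i) →
      (∑' i, |lam i - mu i|) ≤ ∑' i, |lam i - mu (σ i)| := by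
    intro d
    induction d with
    | zero =>
      intro k hk σ hfix
      have heq : ∀ i, |lam i - mu (σ i)| = |lam i - mu i| := by
        intro i
        rcases lt_or_ge i n with h | h
        · rw [hfix i (by omega)]
        · have h1 := hn i h
          have h2 : mu (σ i) = 0 := by
            rcases lt_or_ge (σ i) n with hs | hs
            · have ht : σ (σ i) = σ i := hfix _ (by omega)
              have : i = σ i := σ.injective ht.symm
              omega
            · exact (hn _ hs).2
          rw [h1.1, h1.2, h2]
      exact (tsum_congr heq).ge
    | succ d ih =>
      intro k hk σ hfix
      by_cases hσk : σ k = k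
      · refine ih (k + 1) (by omega) σ fun i hi => ?_
        rcases lt_or_eq_of_le (Nat.lt_succ_iff.mp hi) with h | h
        · exact hfix i h
        · rw [h, hσk]
      · set j := σ.symm k with hj
        have hσj : σ j = k := σ.apply_symm_apply k
        have hjk : k < j := by
          rcases lt_trichotomy j k with h | h | h
          · have := hfix j h; rw [hσj] at this; omega
          · rw [h] at hσj; exact absurd hσj hσk
          · exact h
        have hmk : k < σ k := by
          rcases lt_trichotomy (σ k) k with h | h | h
          · have ht : σ (σ k) = σ k := hfix _ h
            have : k = σ k := σ.injective ht.symm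
            omega
          · exact absurd h hσk
          · exact h
        set σ' := σ * Equiv.swap k j with hσ'
        have hσ'k : σ' k = k := by
          simp [hσ', Equiv.Perm.mul_apply, Equiv.swap_apply_left, hσj]
        have hσ'fix : ∀ i < k + 1, σ' i = i := by
          intro i hi
          rcases lt_or_eq_of_le (Nat.lt_succ_iff.mp hi) with h | h
          · have h1 : i ≠ k := by omega
            have h2 : i ≠ j := by omega
            simp only [hσ', Equiv.Perm.mul_apply, Equiv.swap_apply_of_ne_of_ne h1 h2]
            exact hfix i h
          · rw [h]; exact hσ'k
        have step : (∑' i, |lam i - mu (σ' i)|) ≤ ∑' i, |lam i - mu (σ i)| := by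
          refine tsum_two _ _ (hsumm σ) (hsumm σ') k j hjk.ne ?_ ?_
          · intro i hik hij
            simp only [hσ', Equiv.Perm.mul_apply, Equiv.swap_apply_of_ne_of_ne hik hij]
          · have hσ'j : σ' j = σ k := by
              simp [hσ', Equiv.Perm.mul_apply, Equiv.swap_apply_right]
            rw [hσ'k, hσ'j, hσj]
            exact exch (lam k) (lam j) (mu k) (mu (σ k)) (hlam hjk.le) (hmu hmk.le)
        exact (ih (k + 1) (by omega) σ' hσ'fix).trans step
  apply le_antisymm
  · refine ciInf_le_of_le ⟨0, ?_⟩ (Equiv.refl ℕ) ?_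
    · rintro x ⟨σ, rfl⟩
      exact tsum_nonneg fun i => abs_nonneg _
    · simp
  · exact le_ciInf fun σ => main n 0 (by omega) σ fun i hi => absurd hi (Nat.not_lt_zero i)
end
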